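/- arXiv:0805.3443 — 2 statements merged into one kernel-verified Lean document; each statement's English description precedes it below -/
import Mathlib

section
/- With H₁ = (p₁²+p₂²)/2 - α₁/(2q₁²) - α₂/(2q₂²), H₂ = (p₁²-p₂²)/2 - α₁/(2q₁²) + α₂/(2q₂²), and K = -p₁q₁(H₁-H₂) + p₂q₂(H₁+H₂), the Poisson bracket satisfies {H₁, K} = 0, i.e., K is a (cubic in momenta) integral of motion of H₁. -/
noncomputable def pb (F G : ℝ → ℝ → ℝ → ℝ → ℝ) (q₁ q₂ p₁ p₂ : ℝ) : ℝ :=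
  deriv (fun t => F q₁ q₂ t p₂) p₁ * deriv (fun t => G t q₂ p₁ p₂) q₁
  - deriv (fun t => F t q₂ p₁ p₂) q₁ * deriv (fun t => G q₁ q₂ t p₂) p₁
  + deriv (fun t => F q₁ q₂ p₁ t) p₂ * deriv (fun t => G q₁ t p₁ p₂) q₂
  - deriv (fun t => F q₁ t p₁ p₂) q₂ * deriv (fun t => G q₁ q₂ p₁ t) p₂

noncomputable def H₁cal (α₁ α₂ : ℝ) : ℝ → ℝ → ℝ → ℝ → ℝ :=
  fun q₁ q₂ p₁ p₂ => (p₁^2 + p₂^2)/2 - α₁/(2*q₁^2) - α₂/(2*q₂^2)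

noncomputable def H₂cal (α₁ α₂ : ℝ) : ℝ → ℝ → ℝ → ℝ → ℝ :=
  fun q₁ q₂ p₁ p₂ => (p₁^2 - p₂^2)/2 - α₁/(2*q₁^2) + α₂/(2*q₂^2)

noncomputable def Kcal (α₁ α₂ : ℝ) : ℝ → ℝ → ℝ → ℝ → ℝ :=
  fun q₁ q₂ p₁ p₂ =>
    -p₁*q₁*(H₁cal α₁ α₂ q₁ q₂ p₁ p₂ - H₂cal α₁ α₂ q₁ q₂ p₁ p₂)
    + p₂*q₂*(H₁cal α₁ α₂ q₁ q₂ p₁ p₂ + H₂cal α₁ α₂ q₁ q₂ p₁ p₂)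

/-! Since `H₁ - H₂ = p₂² - α₂/q₂²` and `H₁ + H₂ = p₁² - α₁/q₁²`, every one-variable slice of `H₁`
and of `K` is a Laurent polynomial `a + b t + c t² + d / t²`, so all eight partial derivatives
in the bracket are explicit, and `{H₁, K} = 0` is then an identity of rational functions. -/

theorem hasDerivAt_quadratic (a b c x : ℝ) :
    HasDerivAt (fun t => a + b * t + c * t ^ 2) (b + 2 * c * x) x := by
  refine (((hasDerivAt_id x).const_mul b).const_add a |>.add
    ((hasDerivAt_pow 2 x).const_mul c)).congr_deriv ?_
  push_cast
  ring

theorem hasDerivAt_laurent (a b c d : ℝ) {x : ℝ} (hx : x ≠ 0) :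
    HasDerivAt (fun t => a + b * t + c * t ^ 2 + d / t ^ 2) (b + 2 * c * x - 2 * d / x ^ 3) x := by
  have hsq : HasDerivAt (fun t => t ^ 2) (2 * x) x := by
    simpa using hasDerivAt_pow 2 x
  refine ((hasDerivAt_quadratic a b c x).add
    ((hasDerivAt_const x d).div hsq (pow_ne_zero 2 hx))).congr_deriv ?_
  field_simp
  ring

section Slices

variable (α₁ α₂ q₁ q₂ p₁ p₂ : ℝ)

theorem hasDerivAt_H₁cal_p₁ : HasDerivAt (fun t => H₁cal α₁ α₂ q₁ q₂ t p₂) p₁ p₁ := by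
  convert hasDerivAt_quadratic (p₂ ^ 2 / 2 - α₁ / (2 * q₁ ^ 2) - α₂ / (2 * q₂ ^ 2)) 0 (1 / 2) p₁
    using 1
  · funext t; simp only [H₁cal]; ring
  · ring

theorem hasDerivAt_H₁cal_p₂ : HasDerivAt (fun t => H₁cal α₁ α₂ q₁ q₂ p₁ t) p₂ p₂ := by
  convert hasDerivAt_quadratic (p₁ ^ 2 / 2 - α₁ / (2 * q₁ ^ 2) - α₂ / (2 * q₂ ^ 2)) 0 (1 / 2) p₂
    using 1
  · funext t; simp only [H₁cal]; ring
  · ring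

theorem hasDerivAt_H₁cal_q₁ (hq₁ : q₁ ≠ 0) :
    HasDerivAt (fun t => H₁cal α₁ α₂ t q₂ p₁ p₂) (α₁ / q₁ ^ 3) q₁ := by
  convert hasDerivAt_laurent ((p₁ ^ 2 + p₂ ^ 2) / 2 - α₂ / (2 * q₂ ^ 2)) 0 0 (-α₁ / 2) hq₁
    using 1
  · funext t; simp only [H₁cal]; ring
  · ring

theorem hasDerivAt_H₁cal_q₂ (hq₂ : q₂ ≠ 0) :
    HasDerivAt (fun t => H₁cal α₁ α₂ q₁ t p₁ p₂) (α₂ / q₂ ^ 3) q₂ := by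
  convert hasDerivAt_laurent ((p₁ ^ 2 + p₂ ^ 2) / 2 - α₁ / (2 * q₁ ^ 2)) 0 0 (-α₂ / 2) hq₂
    using 1
  · funext t; simp only [H₁cal]; ring
  · ring

theorem hasDerivAt_Kcal_p₁ :
    HasDerivAt (fun t => Kcal α₁ α₂ q₁ q₂ t p₂)
      (-q₁ * (p₂ ^ 2 - α₂ / q₂ ^ 2) + 2 * p₁ * p₂ * q₂) p₁ := by
  convert hasDerivAt_quadratic (-α₁ * p₂ * q₂ / q₁ ^ 2) (-q₁ * (p₂ ^ 2 - α₂ / q₂ ^ 2))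
    (p₂ * q₂) p₁ using 1
  · funext t; simp only [Kcal, H₁cal, H₂cal]; ring
  · ring

theorem hasDerivAt_Kcal_p₂ :
    HasDerivAt (fun t => Kcal α₁ α₂ q₁ q₂ p₁ t)
      (q₂ * (p₁ ^ 2 - α₁ / q₁ ^ 2) - 2 * p₁ * p₂ * q₁) p₂ := by
  convert hasDerivAt_quadratic (α₂ * p₁ * q₁ / q₂ ^ 2) (q₂ * (p₁ ^ 2 - α₁ / q₁ ^ 2))
    (-p₁ * q₁) p₂ using 1
  · funext t; simp only [Kcal, H₁cal, H₂cal]; ring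
  · ring

theorem hasDerivAt_Kcal_q₁ (hq₁ : q₁ ≠ 0) :
    HasDerivAt (fun t => Kcal α₁ α₂ t q₂ p₁ p₂)
      (-p₁ * (p₂ ^ 2 - α₂ / q₂ ^ 2) + 2 * α₁ * p₂ * q₂ / q₁ ^ 3) q₁ := by
  convert hasDerivAt_laurent (p₁ ^ 2 * p₂ * q₂) (-p₁ * (p₂ ^ 2 - α₂ / q₂ ^ 2)) 0
    (-α₁ * p₂ * q₂) hq₁ using 1
  · funext t; simp only [Kcal, H₁cal, H₂cal]; ring
  · ring

theorem hasDerivAt_Kcal_q₂ (hq₂ : q₂ ≠ 0) :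
    HasDerivAt (fun t => Kcal α₁ α₂ q₁ t p₁ p₂)
      (p₂ * (p₁ ^ 2 - α₁ / q₁ ^ 2) - 2 * α₂ * p₁ * q₁ / q₂ ^ 3) q₂ := by
  convert hasDerivAt_laurent (-p₁ * q₁ * p₂ ^ 2) (p₂ * (p₁ ^ 2 - α₁ / q₁ ^ 2)) 0
    (α₂ * p₁ * q₁) hq₂ using 1
  · funext t; simp only [Kcal, H₁cal, H₂cal]; ring
  · ring

end Slices

theorem stmt1 (α₁ α₂ : ℝ) (q₁ q₂ p₁ p₂ : ℝ) (hq₁ : q₁ ≠ 0) (hq₂ : q₂ ≠ 0) :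
    pb (H₁cal α₁ α₂) (Kcal α₁ α₂) q₁ q₂ p₁ p₂ = 0 := by
  rw [pb, (hasDerivAt_H₁cal_p₁ α₁ α₂ q₁ q₂ p₁ p₂).deriv,
    (hasDerivAt_H₁cal_p₂ α₁ α₂ q₁ q₂ p₁ p₂).deriv,
    (hasDerivAt_H₁cal_q₁ α₁ α₂ q₁ q₂ p₁ p₂ hq₁).deriv,
    (hasDerivAt_H₁cal_q₂ α₁ α₂ q₁ q₂ p₁ p₂ hq₂).deriv,
    (hasDerivAt_Kcal_p₁ α₁ α₂ q₁ q₂ p₁ p₂).deriv,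
    (hasDerivAt_Kcal_p₂ α₁ α₂ q₁ q₂ p₁ p₂).deriv,
    (hasDerivAt_Kcal_q₁ α₁ α₂ q₁ q₂ p₁ p₂ hq₁).deriv,
    (hasDerivAt_Kcal_q₂ α₁ α₂ q₁ q₂ p₁ p₂ hq₂).deriv]
  field_simp
  ring
end

section
/- If a, b, β, βᵍ, βʰ, κ are real numbers with a ≠ 0, b ≠ 0, k ≠ 0, κ ≠ 0, and the identity abkκ·q^{m+k-1} = b²β·q^{2k} + bβᵍ·q^{k} + βʰ holds for all q > 0, then after differentiating and clearing, the identity (m-k-1)b²β·q^{k} + (m-1)bβᵍ + (m+k-1)βʰ·q^{-k} = 0 holds for all q > 0. -/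
/-! Both sides are generalized polynomials in `q` that agree on the open set `(0, ∞)`, so the Euler
operator `q d/dq` may be applied to the identity; it multiplies each monomial `q ^ e` by `e`.
Subtracting `m + k - 1` times the identity itself kills the left-hand side, and dividing by `q ^ k`
gives the claim. -/

open Finset

theorem euler_rpow_sum_eq_zero {ι : Type*} (s : Finset ι) (c e : ι → ℝ)
    (h : ∀ q : ℝ, 0 < q → ∑ i ∈ s, c i * q ^ e i = 0) {q : ℝ} (hq : 0 < q) :
    ∑ i ∈ s, c i * e i * q ^ e i = 0 := by
  have hderiv : HasDerivAt (fun x => ∑ i ∈ s, c i * x ^ e i)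
      (∑ i ∈ s, c i * (e i * q ^ (e i - 1))) q :=
    HasDerivAt.fun_sum fun i _ =>
      (Real.hasDerivAt_rpow_const (Or.inl hq.ne')).const_mul (c i)
  have hzero : HasDerivAt (fun x => ∑ i ∈ s, c i * x ^ e i) 0 q :=
    (hasDerivAt_const q 0).congr_of_eventuallyEq <| by
      filter_upwards [Ioi_mem_nhds hq] with x hx using h x hx
  calc ∑ i ∈ s, c i * e i * q ^ e i
      = q * ∑ i ∈ s, c i * (e i * q ^ (e i - 1)) := by
        rw [mul_sum]
        refine sum_congr rfl fun i _ => ?_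
        rw [Real.rpow_sub_one hq.ne']
        field_simp
    _ = 0 := by rw [hderiv.unique hzero, mul_zero]

theorem stmt7_general (a b k m κ β βg βh : ℝ)
    (hid : ∀ q : ℝ, 0 < q →
      a*b*k*κ * q ^ (m + k - 1) = b^2*β * q ^ (2*k) + b*βg * q ^ k + βh) :
    ∀ q : ℝ, 0 < q →
      (m - k - 1)*b^2*β * q ^ k + (m - 1)*b*βg + (m + k - 1)*βh * q ^ (-k) = 0 := by
  intro q hq
  have hsum : ∀ x : ℝ, 0 < x → ∑ i : Fin 4, ![a*b*k*κ, -(b^2*β), -(b*βg), -βh] i *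
      x ^ ![m + k - 1, 2*k, k, 0] i = 0 := by
    intro x hx
    simp only [Fin.sum_univ_four, Matrix.cons_val, Real.rpow_zero]
    linear_combination hid x hx
  have heuler := euler_rpow_sum_eq_zero _ _ _ hsum hq
  simp only [Fin.sum_univ_four, Matrix.cons_val, Real.rpow_zero] at heuler
  have hidq := hid q hq
  have hq2k : q ^ (2*k) = (q ^ k) ^ 2 := by rw [mul_comm, Real.rpow_mul hq.le, Real.rpow_two]
  have hqk : 0 < q ^ k := Real.rpow_pos_of_pos hq k
  rw [hq2k] at heuler hidq
  rw [Real.rpow_neg hq.le]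
  field_simp
  linear_combination heuler - (m + k - 1) * hidq

theorem stmt7 (a b k m κ β βg βh : ℝ)
    (ha : a ≠ 0) (hb : b ≠ 0) (hk : k ≠ 0) (hκ : κ ≠ 0)
    (hid : ∀ q : ℝ, 0 < q →
      a*b*k*κ * q ^ (m + k - 1) = b^2*β * q ^ (2*k) + b*βg * q ^ k + βh) :
    ∀ q : ℝ, 0 < q →
      (m - k - 1)*b^2*β * q ^ k + (m - 1)*b*βg + (m + k - 1)*βh * q ^ (-k) = 0 :=
  stmt7_general a b k m κ β βg βh hid
end
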